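/- Let f : ℝ^n → ℝ be harmonic (twice continuously differentiable with vanishing Laplacian) and positively homogeneous of degree one, i.e. f(ρ y) = ρ f(y) for all ρ > 0 and y ∈ ℝ^n. Then f is linear: f(y) = Df(0) · y for all y. -/
import Mathlib


theorem homogeneous_degree_one_harmonic_is_linear
    (n : ℕ) (f : EuclideanSpace ℝ (Fin n) → ℝ)
    (hf : ContDiff ℝ 2 f)
    (hharm : ∀ x : EuclideanSpace ℝ (Fin n),
      ∑ i : Fin n, fderiv ℝ (fun y => fderiv ℝ f y (EuclideanSpace.single i 1)) x
        (EuclideanSpace.single i 1) = 0)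
    (hhom : ∀ ρ : ℝ, 0 < ρ → ∀ y : EuclideanSpace ℝ (Fin n), f (ρ • y) = ρ * f y) :
    ∀ y : EuclideanSpace ℝ (Fin n), f y = fderiv ℝ f 0 y := by
  intro y
  have hd : DifferentiableAt ℝ f 0 :=
    (hf.differentiable (by norm_num)).differentiableAt
  have h0 : f 0 = 0 := by
    have h1 := hhom 2 (by norm_num) 0
    simp only [smul_zero] at h1
    linarith
  -- chain rule: t ↦ f (t • y) has derivative (fderiv f 0) y at 0
  have hg : HasDerivAt (fun t : ℝ => t • y) y 0 := by
    simpa using (hasDerivAt_id (0 : ℝ)).smul_const y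
  have hc : HasDerivAt (fun t : ℝ => f (t • y)) (fderiv ℝ f 0 y) 0 := by
    have h0' : HasFDerivAt f (fderiv ℝ f 0) ((0 : ℝ) • y) := by
      rw [zero_smul]; exact hd.hasFDerivAt
    exact h0'.comp_hasDerivAt 0 hg
  -- the same function agrees with t ↦ t * f y on Ioi 0
  have h2 : HasDerivWithinAt (fun t : ℝ => f (t • y)) (f y) (Set.Ioi 0) 0 := by
    have base : HasDerivWithinAt (fun t : ℝ => t * f y) (f y) (Set.Ioi 0) 0 := by
      simpa using ((hasDerivAt_id (0 : ℝ)).mul_const (f y)).hasDerivWithinAt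
    refine base.congr (fun t ht => ?_) (by simp [h0])
    exact hhom t ht y
  have := (uniqueDiffWithinAt_Ioi (0 : ℝ)).eq_deriv _ hc.hasDerivWithinAt h2
  linarith
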